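/- Matrix square root perturbation bound (Schmitt): for symmetric positive definite matrices A and B, ‖A^{1/2} − B^{1/2}‖ ≤ ‖A − B‖ / (λ_min(A)^{1/2} + λ_min(B)^{1/2}), and in particular ‖A^{1/2} − B^{1/2}‖ ≤ ‖A − B‖ / λ_min(B)^{1/2}, where ‖·‖ is the spectral (operator) norm and λ_min denotes the smallest eigenvalue. -/

import Mathlib

open Matrix
open scoped Matrix.Norms.L2Operator

/-- The (unique) positive semidefinite square root, extended by `0` to all matrices. -/
noncomputable def sqrtm {m : Type*} [Fintype m] [DecidableEq m]
    (A : Matrix m m ℝ) : Matrix m m ℝ :=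
  open scoped Classical in
  if h : A.PosSemidef then
    h.1.eigenvectorUnitary.1 * diagonal ((RCLike.ofReal : ℝ → ℝ) ∘ Real.sqrt ∘ h.1.eigenvalues) *
      (star h.1.eigenvectorUnitary : Matrix m m ℝ)
  else 0

/-- The smallest eigenvalue of a Hermitian matrix (junk value `0` otherwise). -/
noncomputable def lmin {m : Type*} [Fintype m] [DecidableEq m] (A : Matrix m m ℝ) : ℝ :=
  open scoped Classical in
  if h : A.IsHermitian then ⨅ i, h.eigenvalues i else 0

section aux
variable {n : ℕ}

lemma sqrtm_eq_cfc {m : Type*} [Fintype m] [DecidableEq m] {A : Matrix m m ℝ}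
    (hA : A.PosSemidef) : sqrtm A = cfc Real.sqrt A := by
  rw [sqrtm, dif_pos hA, hA.1.cfc_eq]
  rfl

open scoped MatrixOrder in
lemma sqrtm_posSemidef {m : Type*} [Fintype m] [DecidableEq m] {A : Matrix m m ℝ}
    (hA : A.PosSemidef) : (sqrtm A).PosSemidef := by
  rw [sqrtm_eq_cfc hA]
  exact nonneg_iff_posSemidef.mp (cfc_nonneg fun x _ => Real.sqrt_nonneg x)

open scoped MatrixOrder in
lemma sqrtm_mul_self {m : Type*} [Fintype m] [DecidableEq m] {A : Matrix m m ℝ}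
    (hA : A.PosSemidef) : sqrtm A * sqrtm A = A := by
  have h0 : (0 : Matrix m m ℝ) ≤ A := nonneg_iff_posSemidef.mpr hA
  rw [sqrtm_eq_cfc hA, ← cfc_mul Real.sqrt Real.sqrt A]
  conv_rhs => rw [← cfc_id ℝ A]
  exact cfc_congr fun x hx => Real.mul_self_sqrt (spectrum_nonneg_of_nonneg h0 hx)

local notation "⟪" x ", " y "⟫" => @inner ℝ _ _ x y

lemma clm_apply_basis {M : Matrix (Fin n) (Fin n) ℝ} (hM : M.IsHermitian) (i : Fin n) :
    (toEuclideanCLM (𝕜 := ℝ) M) (hM.eigenvectorBasis i)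
      = hM.eigenvalues i • hM.eigenvectorBasis i := by
  have hb := hM.mulVec_eigenvectorBasis i
  ext j
  have := congrFun hb j
  simpa [ofLp_toEuclideanCLM] using this

lemma repr_clm {M : Matrix (Fin n) (Fin n) ℝ} (hM : M.IsHermitian) (x : EuclideanSpace ℝ (Fin n)) (i : Fin n) :
    hM.eigenvectorBasis.repr ((toEuclideanCLM (𝕜 := ℝ) M) x) i
      = hM.eigenvalues i * hM.eigenvectorBasis.repr x i := by
  rw [OrthonormalBasis.repr_apply_apply, OrthonormalBasis.repr_apply_apply]
  have hsym := (Matrix.isHermitian_iff_isSymmetric.mp hM)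
  have h1 : ⟪hM.eigenvectorBasis i, (toEuclideanCLM (𝕜 := ℝ) M) x⟫
      = ⟪(toEuclideanCLM (𝕜 := ℝ) M) (hM.eigenvectorBasis i), x⟫ := by
    have := hsym (hM.eigenvectorBasis i) x
    simpa [← Matrix.coe_toEuclideanCLM_eq_toEuclideanLin] using this.symm
  rw [h1, clm_apply_basis hM i, real_inner_smul_left]

lemma inner_clm {M : Matrix (Fin n) (Fin n) ℝ} (hM : M.IsHermitian) (x : EuclideanSpace ℝ (Fin n)) :
    ⟪x, (toEuclideanCLM (𝕜 := ℝ) M) x⟫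
      = ∑ i, hM.eigenvalues i * (hM.eigenvectorBasis.repr x i)^2 := by
  rw [← hM.eigenvectorBasis.repr.inner_map_map x ((toEuclideanCLM (𝕜 := ℝ) M) x)]
  rw [PiLp.inner_apply]
  refine Finset.sum_congr rfl fun i _ => ?_
  rw [repr_clm hM x i]
  simp [RCLike.inner_apply]
  ring

lemma norm_sq_clm {M : Matrix (Fin n) (Fin n) ℝ} (hM : M.IsHermitian) (x : EuclideanSpace ℝ (Fin n)) :
    ‖(toEuclideanCLM (𝕜 := ℝ) M) x‖^2
      = ∑ i, (hM.eigenvalues i)^2 * (hM.eigenvectorBasis.repr x i)^2 := by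
  rw [← hM.eigenvectorBasis.repr.norm_map, EuclideanSpace.norm_eq, Real.sq_sqrt (by positivity)]
  refine Finset.sum_congr rfl fun i _ => ?_
  rw [repr_clm hM x i]
  simp [sq_abs, mul_pow]

lemma norm_sq_basis (x : EuclideanSpace ℝ (Fin n)) (b : OrthonormalBasis (Fin n) ℝ (EuclideanSpace ℝ (Fin n))) :
    ‖x‖^2 = ∑ i, (b.repr x i)^2 := by
  rw [← b.repr.norm_map x, EuclideanSpace.norm_eq, Real.sq_sqrt (by positivity)]
  simp [sq_abs]

lemma opnorm_le {M : Matrix (Fin n) (Fin n) ℝ} (hM : M.IsHermitian) {r : ℝ} (hr : 0 ≤ r)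
    (h : ∀ i, |hM.eigenvalues i| ≤ r) : ‖M‖ ≤ r := by
  rw [Matrix.cstar_norm_def]
  refine ContinuousLinearMap.opNorm_le_bound _ hr fun x => ?_
  have h2 : ‖(toEuclideanCLM (𝕜 := ℝ) M) x‖^2 ≤ (r * ‖x‖)^2 := by
    rw [norm_sq_clm hM x, mul_pow, norm_sq_basis x hM.eigenvectorBasis, Finset.mul_sum]
    refine Finset.sum_le_sum fun i _ => ?_
    have := h i
    have h3 : (hM.eigenvalues i)^2 ≤ r^2 := by
      nlinarith [abs_nonneg (hM.eigenvalues i), sq_abs (hM.eigenvalues i)]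
    nlinarith [sq_nonneg (hM.eigenvectorBasis.repr x i)]
  nlinarith [norm_nonneg ((toEuclideanCLM (𝕜 := ℝ) M) x), norm_nonneg x,
    mul_nonneg hr (norm_nonneg x)]

lemma abs_eig_le_opnorm {M : Matrix (Fin n) (Fin n) ℝ} (hM : M.IsHermitian) (i : Fin n) :
    |hM.eigenvalues i| ≤ ‖M‖ := by
  have h1 : ‖(toEuclideanCLM (𝕜 := ℝ) M) (hM.eigenvectorBasis i)‖ = |hM.eigenvalues i| := by
    rw [clm_apply_basis hM i, norm_smul, hM.eigenvectorBasis.orthonormal.1 i]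
    simp [Real.norm_eq_abs]
  calc |hM.eigenvalues i| = _ := h1.symm
    _ ≤ ‖toEuclideanCLM (𝕜 := ℝ) M‖ * ‖hM.eigenvectorBasis i‖ := ContinuousLinearMap.le_opNorm _ _
    _ = ‖M‖ := by rw [hM.eigenvectorBasis.orthonormal.1 i, mul_one, Matrix.cstar_norm_def]

lemma rayleigh_lower {M : Matrix (Fin n) (Fin n) ℝ} (hM : M.IsHermitian)
    (x : EuclideanSpace ℝ (Fin n)) :
    (⨅ i, hM.eigenvalues i) * ‖x‖^2 ≤ ⟪x, (toEuclideanCLM (𝕜 := ℝ) M) x⟫ := by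
  rw [inner_clm hM x, norm_sq_basis x hM.eigenvectorBasis, Finset.mul_sum]
  refine Finset.sum_le_sum fun i _ => ?_
  have h1 : (⨅ i, hM.eigenvalues i) ≤ hM.eigenvalues i :=
    ciInf_le (Finite.bddBelow_range _) i
  nlinarith [sq_nonneg (hM.eigenvectorBasis.repr x i)]

lemma sqrt_inner_lower (hn : 0 < n) {A : Matrix (Fin n) (Fin n) ℝ} (hA : A.PosDef)
    (v : EuclideanSpace ℝ (Fin n)) (hv : ‖v‖ = 1) :
    Real.sqrt (lmin A) ≤ ⟪v, (toEuclideanCLM (𝕜 := ℝ) (sqrtm A)) v⟫ := by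
  have : Nonempty (Fin n) := ⟨⟨0, hn⟩⟩
  have hX : (sqrtm A).PosSemidef := sqrtm_posSemidef hA.posSemidef
  have hXX : sqrtm A * sqrtm A = A := sqrtm_mul_self hA.posSemidef
  have hlminA : lmin A = ⨅ i, hA.isHermitian.eigenvalues i := dif_pos _
  have hXH : (sqrtm A).IsHermitian := hX.1
  -- every eigenvalue of sqrtm A is at least sqrt (lmin A)
  have step1 : ∀ j, Real.sqrt (lmin A) ≤ hXH.eigenvalues j := by
    intro j
    have hnn : 0 ≤ hXH.eigenvalues j := hX.eigenvalues_nonneg j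
    set w := hXH.eigenvectorBasis j with hw
    have hwnorm : ‖w‖ = 1 := hXH.eigenvectorBasis.orthonormal.1 j
    have hsq : ⟪w, (toEuclideanCLM (𝕜 := ℝ) (sqrtm A * sqrtm A)) w⟫ = (hXH.eigenvalues j)^2 := by
      rw [_root_.map_mul, ContinuousLinearMap.mul_apply, clm_apply_basis hXH j, _root_.map_smul,
        clm_apply_basis hXH j, smul_smul, real_inner_smul_right,
        real_inner_self_eq_norm_sq, hwnorm]
      ring
    have hlow : lmin A ≤ (hXH.eigenvalues j)^2 := by
      have := rayleigh_lower hA.isHermitian w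
      rw [hwnorm] at this
      rw [hXX] at hsq
      rw [hsq] at this
      simpa [hlminA] using this
    calc Real.sqrt (lmin A) ≤ Real.sqrt ((hXH.eigenvalues j)^2) := Real.sqrt_le_sqrt hlow
      _ = hXH.eigenvalues j := by rw [Real.sqrt_sq hnn]
  have := rayleigh_lower hXH v
  rw [hv] at this
  have h2 : Real.sqrt (lmin A) ≤ ⨅ j, hXH.eigenvalues j := le_ciInf step1
  calc Real.sqrt (lmin A) ≤ ⨅ j, hXH.eigenvalues j := h2
    _ ≤ _ := by simpa using this

end aux

/-- Schmitt's matrix square root perturbation bound in operator norm: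
`‖A^{1/2} − B^{1/2}‖ ≤ ‖A − B‖ / (λ_min(A)^{1/2} + λ_min(B)^{1/2}) ≤ ‖A − B‖ / λ_min(B)^{1/2}`. -/
theorem sqrt_perturbation_bound {n : ℕ}
    (A B : Matrix (Fin n) (Fin n) ℝ) (hA : A.PosDef) (hB : B.PosDef) :
    ‖sqrtm A - sqrtm B‖ ≤ ‖A - B‖ / (Real.sqrt (lmin A) + Real.sqrt (lmin B)) ∧
    ‖sqrtm A - sqrtm B‖ ≤ ‖A - B‖ / Real.sqrt (lmin B) := by
  rcases Nat.eq_zero_or_pos n with hn | hn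
  · subst hn
    have hsub : Subsingleton (Matrix (Fin 0) (Fin 0) ℝ) :=
      ⟨fun a b => by ext i; exact i.elim0⟩
    have e1 : sqrtm A - sqrtm B = (0 : Matrix (Fin 0) (Fin 0) ℝ) := Subsingleton.elim _ _
    have e2 : A - B = (0 : Matrix (Fin 0) (Fin 0) ℝ) := Subsingleton.elim _ _
    rw [e1, e2, norm_zero]
    constructor <;> positivity
  have hne : Nonempty (Fin n) := ⟨⟨0, hn⟩⟩
  -- positivity of the smallest eigenvalues
  have hlminB : lmin B = ⨅ i, hB.isHermitian.eigenvalues i := dif_pos _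
  have hlminA : lmin A = ⨅ i, hA.isHermitian.eigenvalues i := dif_pos _
  have hlminApos : 0 < lmin A := by
    obtain ⟨j, hj⟩ := Finite.exists_min hA.isHermitian.eigenvalues
    rw [hlminA]; exact lt_of_lt_of_le (hA.eigenvalues_pos j) (le_ciInf hj)
  have hlminBpos : 0 < lmin B := by
    obtain ⟨j, hj⟩ := Finite.exists_min hB.isHermitian.eigenvalues
    rw [hlminB]; exact lt_of_lt_of_le (hB.eigenvalues_pos j) (le_ciInf hj)
  have hsApos : 0 < Real.sqrt (lmin A) := Real.sqrt_pos.mpr hlminApos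
  have hsBpos : 0 < Real.sqrt (lmin B) := Real.sqrt_pos.mpr hlminBpos
  -- square roots
  have hX : (sqrtm A).PosSemidef := sqrtm_posSemidef hA.posSemidef
  have hXX : sqrtm A * sqrtm A = A := sqrtm_mul_self hA.posSemidef
  have hY : (sqrtm B).PosSemidef := sqrtm_posSemidef hB.posSemidef
  have hYY : sqrtm B * sqrtm B = B := sqrtm_mul_self hB.posSemidef
  set E : Matrix (Fin n) (Fin n) ℝ := sqrtm A - sqrtm B with hEdef
  have hE : E.IsHermitian := hX.1.sub hY.1
  -- pick an eigenvalue of E of maximal absolute value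
  obtain ⟨i0, hi0⟩ := Finite.exists_max (fun i => |hE.eigenvalues i|)
  set lam := hE.eigenvalues i0 with hlam
  set v : EuclideanSpace ℝ (Fin n) := hE.eigenvectorBasis i0 with hvdef
  have hvnorm : ‖v‖ = 1 := hE.eigenvectorBasis.orthonormal.1 i0
  have hnormE : ‖E‖ = |lam| :=
    le_antisymm (opnorm_le hE (abs_nonneg _) hi0) (abs_eig_le_opnorm hE i0)
  -- the key identity
  have hEv : (toEuclideanCLM (𝕜 := ℝ) E) v = lam • v := clm_apply_basis hE i0
  have hAB : A - B = sqrtm A * E + E * sqrtm B := by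
    have h' : sqrtm A * E + E * sqrtm B = sqrtm A * sqrtm A - sqrtm B * sqrtm B := by
      rw [hEdef]; noncomm_ring
    rw [h', hXX, hYY]
  have hsymE := Matrix.isHermitian_iff_isSymmetric.mp hE
  have key : (inner ℝ v ((toEuclideanCLM (𝕜 := ℝ) (A - B)) v) : ℝ)
      = lam * ((inner ℝ v ((toEuclideanCLM (𝕜 := ℝ) (sqrtm A)) v) : ℝ)
        + (inner ℝ v ((toEuclideanCLM (𝕜 := ℝ) (sqrtm B)) v) : ℝ)) := by
    rw [hAB, map_add, _root_.map_mul, _root_.map_mul, ContinuousLinearMap.add_apply,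
      ContinuousLinearMap.mul_apply, ContinuousLinearMap.mul_apply, inner_add_right,
      hEv, _root_.map_smul, real_inner_smul_right]
    have h2 : (inner ℝ v ((toEuclideanCLM (𝕜 := ℝ) E) ((toEuclideanCLM (𝕜 := ℝ) (sqrtm B)) v)) : ℝ)
        = lam * (inner ℝ v ((toEuclideanCLM (𝕜 := ℝ) (sqrtm B)) v) : ℝ) := by
      have := hsymE v ((toEuclideanCLM (𝕜 := ℝ) (sqrtm B)) v)
      rw [← Matrix.coe_toEuclideanCLM_eq_toEuclideanLin] at this
      calc (inner ℝ v ((toEuclideanCLM (𝕜 := ℝ) E) ((toEuclideanCLM (𝕜 := ℝ) (sqrtm B)) v)) : ℝ)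
          = (inner ℝ ((toEuclideanCLM (𝕜 := ℝ) E) v) ((toEuclideanCLM (𝕜 := ℝ) (sqrtm B)) v) : ℝ) := by
            exact_mod_cast this.symm
        _ = lam * (inner ℝ v ((toEuclideanCLM (𝕜 := ℝ) (sqrtm B)) v) : ℝ) := by
            rw [hEv, real_inner_smul_left]
    rw [h2]; ring
  -- bound the inner product by the norm
  have hbound : |(inner ℝ v ((toEuclideanCLM (𝕜 := ℝ) (A - B)) v) : ℝ)| ≤ ‖A - B‖ := by
    calc |(inner ℝ v ((toEuclideanCLM (𝕜 := ℝ) (A - B)) v) : ℝ)|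
        ≤ ‖v‖ * ‖(toEuclideanCLM (𝕜 := ℝ) (A - B)) v‖ := abs_real_inner_le_norm _ _
      _ ≤ ‖v‖ * (‖toEuclideanCLM (𝕜 := ℝ) (A - B)‖ * ‖v‖) := by
          gcongr; exact ContinuousLinearMap.le_opNorm _ _
      _ = ‖A - B‖ := by rw [hvnorm, Matrix.cstar_norm_def]; ring
  -- lower bounds on the inner products with the square roots
  have hIA : Real.sqrt (lmin A) ≤ (inner ℝ v ((toEuclideanCLM (𝕜 := ℝ) (sqrtm A)) v) : ℝ) :=
    sqrt_inner_lower hn hA v hvnorm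
  have hIB : Real.sqrt (lmin B) ≤ (inner ℝ v ((toEuclideanCLM (𝕜 := ℝ) (sqrtm B)) v) : ℝ) :=
    sqrt_inner_lower hn hB v hvnorm
  -- combine
  have hsum : Real.sqrt (lmin A) + Real.sqrt (lmin B)
      ≤ (inner ℝ v ((toEuclideanCLM (𝕜 := ℝ) (sqrtm A)) v) : ℝ)
        + (inner ℝ v ((toEuclideanCLM (𝕜 := ℝ) (sqrtm B)) v) : ℝ) := add_le_add hIA hIB
  have hmain : |lam| * (Real.sqrt (lmin A) + Real.sqrt (lmin B)) ≤ ‖A - B‖ := by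
    calc |lam| * (Real.sqrt (lmin A) + Real.sqrt (lmin B))
        ≤ |lam| * ((inner ℝ v ((toEuclideanCLM (𝕜 := ℝ) (sqrtm A)) v) : ℝ)
          + (inner ℝ v ((toEuclideanCLM (𝕜 := ℝ) (sqrtm B)) v) : ℝ)) :=
          mul_le_mul_of_nonneg_left hsum (abs_nonneg _)
      _ = |(inner ℝ v ((toEuclideanCLM (𝕜 := ℝ) (A - B)) v) : ℝ)| := by
          rw [key, abs_mul, abs_of_nonneg (le_trans (by positivity) hsum)]
      _ ≤ ‖A - B‖ := hbound
  have h1 : ‖sqrtm A - sqrtm B‖ ≤ ‖A - B‖ / (Real.sqrt (lmin A) + Real.sqrt (lmin B)) := by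
    rw [← hEdef, hnormE, le_div_iff₀ (by positivity)]
    exact hmain
  refine ⟨h1, h1.trans ?_⟩
  exact div_le_div_of_nonneg_left (norm_nonneg _) hsBpos (by linarith)
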